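/- Let G be the subgroup of the group of bijections of ℝ⁴ generated by the three maps T₂(g) = (g₀,g₁,1−g₂,g₃), T₃(g) = (g₀,g₁,g₂,1−g₃), and J_N(g) = ((g₀+g₁−g₂+g₃)/2, (g₀+g₁+g₂−g₃)/2, (−g₀+g₁+g₂+g₃)/2, (g₀−g₁+g₂+g₃)/2). Then: (i) G is isomorphic to the symmetric group S₄; (ii) the mirror map M(g) = (g₁,g₀,g₃,g₂) belongs to G; (iii) every element of G maps the set Π_G onto Π_G. -/

import Mathlib

open Real MeasureTheory

noncomputable section

namespace Heun

/-- The entire function `R(z)`. -/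
def Rc (r α : ℝ) (z : ℂ) : ℂ :=
  ∏' l : ℕ, ((1 - Complex.exp (-(2 * (l : ℂ) + 1) * r * α + 2 * Complex.I * r * z)) *
             (1 - Complex.exp (-(2 * (l : ℂ) + 1) * r * α - 2 * Complex.I * r * z)))

/-- `R` restricted to the real axis (it is real-valued there). -/
def Rr (r α : ℝ) (x : ℝ) : ℝ := (Rc r α x).re

/-- The constant `p = 2r ∏_{k≥1} (1 - e^{-2krα})²`. -/
def pC (r α : ℝ) : ℝ := 2 * r * ∏' k : ℕ, (1 - Real.exp (-2 * ((k : ℝ) + 1) * r * α)) ^ 2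

/-- The entire function `s(z) = e^{irz} R(z + iα/2)/(ip)`. -/
def sC (r α : ℝ) (z : ℂ) : ℂ :=
  Complex.exp (Complex.I * r * z) * Rc r α (z + Complex.I * α / 2) / (Complex.I * pC r α)

/-- `s` restricted to the real axis (it is real-valued there). -/
def sr (r α : ℝ) (x : ℝ) : ℝ := (sC r α x).re

/-- The Weierstrass elliptic function with periods `π/r` and `iα`. -/
def wp (r α : ℝ) (z : ℂ) : ℂ :=
  1 / z ^ 2 + ∑' m : ℤ × ℤ,
    if m = (0, 0) then 0 else
      (1 / (z - (m.1 : ℂ) * ((π / r : ℝ) : ℂ) - Complex.I * (m.2 : ℂ) * α) ^ 2 -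
       1 / ((m.1 : ℂ) * ((π / r : ℝ) : ℂ) + Complex.I * (m.2 : ℂ) * α) ^ 2)

/-- The half-periods `ω₀ = 0`, `ω₁ = π/(2r)`, `ω₂ = iα/2`, `ω₃ = -ω₁ - ω₂`. -/
def om (r α : ℝ) : Fin 4 → ℂ :=
  ![0, ((π / (2 * r) : ℝ) : ℂ), Complex.I * α / 2, -((π / (2 * r) : ℝ) : ℂ) - Complex.I * α / 2]

/-- The Heun potential `V(g;x)` (real-valued for real `x`). -/
def Vr (r α : ℝ) (g : Fin 4 → ℝ) (x : ℝ) : ℝ :=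
  (∑ t : Fin 4, ((g t * (g t - 1) : ℝ) : ℂ) * wp r α ((x : ℂ) + om r α t)).re

/-- `s_g = (g₀+g₁+g₂+g₃)/2`. -/
def sg (g : Fin 4 → ℝ) : ℝ := (g 0 + g 1 + g 2 + g 3) / 2

/-- The dual coupling `g' = J_N g`. -/
def gdual (g : Fin 4 → ℝ) : Fin 4 → ℝ :=
  ![(g 0 + g 1 - g 2 + g 3) / 2, (g 0 + g 1 + g 2 - g 3) / 2,
    (-g 0 + g 1 + g 2 + g 3) / 2, (g 0 - g 1 + g 2 + g 3) / 2]

/-- The kernel `S(g;x,y) = (R(x+y)R(x-y))^{-s_g}`. -/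
def Sk (r α : ℝ) (g : Fin 4 → ℝ) (x y : ℝ) : ℝ :=
  (Rr r α (x + y) * Rr r α (x - y)) ^ (-(sg g))

/-- The weight function `w(g;x)`. -/
def wt (r α : ℝ) (g : Fin 4 → ℝ) (x : ℝ) : ℝ :=
  pC r α ^ (2 * g 0 + 2 * g 1) * sr r α x ^ (2 * g 0) *
    sr r α (π / (2 * r) - x) ^ (2 * g 1) * Rr r α x ^ (2 * g 2) *
    Rr r α (π / (2 * r) - x) ^ (2 * g 3)

/-- The kernel `Ψ(g;x,y) = w(g;x)^{1/2} S(g;x,y) w(g';y)^{1/2}`. -/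
def Psi (r α : ℝ) (g : Fin 4 → ℝ) (x y : ℝ) : ℝ :=
  Real.sqrt (wt r α g x) * Sk r α g x y * Real.sqrt (wt r α (gdual g) y)

/-- `Π̃ = {g : g₀, g₁ > -1/2}`. -/
def PiTilde : Set (Fin 4 → ℝ) := {g | -(1/2 : ℝ) < g 0 ∧ -(1/2 : ℝ) < g 1}

/-- `Π = {g : g₀, g₁, g₀', g₁' > -1/2}`. -/
def PiSet : Set (Fin 4 → ℝ) :=
  {g | -(1/2 : ℝ) < g 0 ∧ -(1/2 : ℝ) < g 1 ∧
       -(1/2 : ℝ) < gdual g 0 ∧ -(1/2 : ℝ) < gdual g 1}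

/-- `Π_r = {g ∈ Π : s_g > 0}`. -/
def PiR : Set (Fin 4 → ℝ) := {g | g ∈ PiSet ∧ 0 < sg g}

/-- `Π_G = {g ∈ Π_r : g₀ + g₁ + 2 > g₂ + g₃}`. -/
def PiG : Set (Fin 4 → ℝ) := {g | g ∈ PiR ∧ g 2 + g 3 < g 0 + g 1 + 2}

/-- The domain `D(g₀,g₁) = s(x)^{g₀} s(π/(2r)-x)^{g₁} 𝓓`, where `𝓓` consists of the
`C²` functions on `[0, π/(2r)]` with vanishing derivative at both endpoints. -/
def HeunDom (r α g0 g1 : ℝ) : Set (ℝ → ℂ) :=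
  {φ | ∃ d : ℝ → ℂ, ContDiff ℝ 2 d ∧ deriv d 0 = 0 ∧ deriv d (π / (2 * r)) = 0 ∧
    ∀ x, φ x = ((sr r α x ^ g0 * sr r α (π / (2 * r) - x) ^ g1 : ℝ) : ℂ) * d x}

/-- The action of the Heun differential operator `H(g) = -d²/dx² + V(g;x)`. -/
def HeunOp (r α : ℝ) (g : Fin 4 → ℝ) (φ : ℝ → ℂ) (x : ℝ) : ℂ :=
  -deriv (deriv φ) x + (Vr r α g x : ℂ) * φ x

/-- The set of eigenvalues of the Heun operator on the domain `D(g₀,g₁)`. -/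
def HeunSpec (r α : ℝ) (g : Fin 4 → ℝ) : Set ℝ :=
  {E | ∃ φ ∈ HeunDom r α (g 0) (g 1), φ ≠ 0 ∧
      ∀ x ∈ Set.Ioo 0 (π / (2 * r)), HeunOp r α g φ x = (E : ℂ) * φ x}


/-- The map `T₂ : g ↦ (g₀, g₁, 1-g₂, g₃)`. -/
def mapT2 (g : Fin 4 → ℝ) : Fin 4 → ℝ := ![g 0, g 1, 1 - g 2, g 3]

/-- The map `T₃ : g ↦ (g₀, g₁, g₂, 1-g₃)`. -/
def mapT3 (g : Fin 4 → ℝ) : Fin 4 → ℝ := ![g 0, g 1, g 2, 1 - g 3]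

/-- The mirror map `M : g ↦ (g₁, g₀, g₃, g₂)`. -/
def mapM (g : Fin 4 → ℝ) : Fin 4 → ℝ := ![g 1, g 0, g 3, g 2]

lemma mapT2_involutive : Function.Involutive mapT2 := by
  intro g; funext i; fin_cases i <;>
    simp [mapT2, Matrix.cons_val_zero, Matrix.cons_val_one, Matrix.head_cons]

lemma mapT3_involutive : Function.Involutive mapT3 := by
  intro g; funext i; fin_cases i <;>
    simp [mapT3, Matrix.cons_val_zero, Matrix.cons_val_one, Matrix.head_cons]

lemma mapM_involutive : Function.Involutive mapM := by
  intro g; funext i; fin_cases i <;>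
    simp [mapM, Matrix.cons_val_zero, Matrix.cons_val_one, Matrix.head_cons]

lemma gdual_involutive : Function.Involutive gdual := by
  intro g; funext i; fin_cases i <;>
    simp [gdual, Matrix.cons_val_zero, Matrix.cons_val_one, Matrix.head_cons] <;> ring

/-- `T₂` as a bijection of `ℝ⁴`. -/
def permT2 : Equiv.Perm (Fin 4 → ℝ) := mapT2_involutive.toPerm

/-- `T₃` as a bijection of `ℝ⁴`. -/
def permT3 : Equiv.Perm (Fin 4 → ℝ) := mapT3_involutive.toPerm

/-- `J_N` as a bijection of `ℝ⁴`. -/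
def permJ : Equiv.Perm (Fin 4 → ℝ) := gdual_involutive.toPerm

/-- The mirror map as a bijection of `ℝ⁴`. -/
def permM : Equiv.Perm (Fin 4 → ℝ) := mapM_involutive.toPerm

/-! The affine change of coordinates `g ↦ (g₀ + g₁, λ(g))`, with `λ(g)` summing to zero,
turns `T₂`, `J_N`, `T₃` into the adjacent transpositions of the four coordinates of `λ`,
all fixing `g₀ + g₁`; hence `G` is the image of a faithful action of `S₄` permuting `λ`.
In these coordinates `Π_G` is cut out by the six inequalities
`2 (g₀ + g₁) + λᵢ + λⱼ > -2`, `i ≠ j`, a condition symmetric under all of `S₄`. -/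

/-- Writing `a = g₀ - g₁`, `b = 2g₂ - 1`, `c = 2g₃ - 1`, this is
`(a - b, a + b, c - a, -a - c)`. -/
def rootCoord (g : Fin 4 → ℝ) : Fin 4 → ℝ :=
  ![g 0 - g 1 - 2 * g 2 + 1, g 0 - g 1 + 2 * g 2 - 1,
    -g 0 + g 1 + 2 * g 3 - 1, -g 0 + g 1 - 2 * g 3 + 1]

def ofRootCoord (W : ℝ) (l : Fin 4 → ℝ) : Fin 4 → ℝ :=
  ![W / 2 + (l 0 + l 1) / 4, W / 2 - (l 0 + l 1) / 4,
    (l 1 - l 0) / 4 + 1 / 2, (l 2 - l 3) / 4 + 1 / 2]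

lemma sum_rootCoord (g : Fin 4 → ℝ) : ∑ i, rootCoord g i = 0 := by
  simp only [Fin.sum_univ_four, rootCoord, Matrix.cons_val_zero, Matrix.cons_val_one,
    Matrix.cons_val]
  ring

lemma rootCoord_ofRootCoord (W : ℝ) {l : Fin 4 → ℝ} (hl : ∑ i, l i = 0) :
    rootCoord (ofRootCoord W l) = l := by
  rw [Fin.sum_univ_four] at hl
  funext i
  fin_cases i <;> simp [rootCoord, ofRootCoord] <;> linarith

lemma ofRootCoord_add (W : ℝ) (l : Fin 4 → ℝ) :
    ofRootCoord W l 0 + ofRootCoord W l 1 = W := by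
  simp [ofRootCoord]

lemma ofRootCoord_rootCoord (g : Fin 4 → ℝ) : ofRootCoord (g 0 + g 1) (rootCoord g) = g := by
  funext i
  fin_cases i <;> simp [rootCoord, ofRootCoord] <;> ring

def rootAct (σ : Equiv.Perm (Fin 4)) (g : Fin 4 → ℝ) : Fin 4 → ℝ :=
  ofRootCoord (g 0 + g 1) (rootCoord g ∘ σ.symm)

lemma rootAct_add (σ : Equiv.Perm (Fin 4)) (g : Fin 4 → ℝ) :
    rootAct σ g 0 + rootAct σ g 1 = g 0 + g 1 :=
  ofRootCoord_add _ _

lemma rootCoord_rootAct (σ : Equiv.Perm (Fin 4)) (g : Fin 4 → ℝ) :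
    rootCoord (rootAct σ g) = rootCoord g ∘ σ.symm :=
  rootCoord_ofRootCoord _ ((Equiv.sum_comp σ.symm (rootCoord g)).trans (sum_rootCoord g))

lemma rootAct_mul (σ τ : Equiv.Perm (Fin 4)) (g : Fin 4 → ℝ) :
    rootAct σ (rootAct τ g) = rootAct (σ * τ) g := by
  rw [rootAct, rootAct_add, rootCoord_rootAct]
  rfl

lemma rootAct_one (g : Fin 4 → ℝ) : rootAct 1 g = g :=
  ofRootCoord_rootCoord g

def rootPerm : Equiv.Perm (Fin 4) →* Equiv.Perm (Fin 4 → ℝ) where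
  toFun σ :=
    { toFun := rootAct σ
      invFun := rootAct σ⁻¹
      left_inv := fun g => by rw [rootAct_mul, inv_mul_cancel, rootAct_one]
      right_inv := fun g => by rw [rootAct_mul, mul_inv_cancel, rootAct_one] }
  map_one' := Equiv.ext rootAct_one
  map_mul' σ τ := Equiv.ext fun g => (rootAct_mul σ τ g).symm

lemma rootPerm_apply (σ : Equiv.Perm (Fin 4)) (g : Fin 4 → ℝ) : rootPerm σ g = rootAct σ g :=
  rfl

lemma rootPerm_injective : Function.Injective rootPerm := by
  refine (injective_iff_map_eq_one rootPerm).2 fun σ hσ => ?_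
  -- a coupling whose root coordinates `(-1, 1, 3, -3)` are pairwise distinct
  have hinj : Function.Injective (rootCoord ![0, 0, 1, 2]) := by
    intro i j
    fin_cases i <;> fin_cases j <;> simp [rootCoord] <;> norm_num
  have hfix : rootCoord ![0, 0, 1, 2] ∘ σ.symm = rootCoord ![0, 0, 1, 2] := by
    rw [← rootCoord_rootAct, ← rootPerm_apply, hσ, Equiv.Perm.one_apply]
  refine Equiv.ext fun i => ?_
  simpa using (hinj (congrFun hfix (σ i))).symm

lemma rootPerm_swap01 : rootPerm (Equiv.swap 0 1) = permT2 := by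
  refine Equiv.ext fun g => funext fun i => ?_
  fin_cases i <;>
    simp [rootPerm_apply, rootAct, ofRootCoord, rootCoord, permT2, mapT2,
      Equiv.swap_apply_def] <;> ring

lemma rootPerm_swap12 : rootPerm (Equiv.swap 1 2) = permJ := by
  refine Equiv.ext fun g => funext fun i => ?_
  fin_cases i <;>
    simp [rootPerm_apply, rootAct, ofRootCoord, rootCoord, permJ, gdual,
      Equiv.swap_apply_def] <;> ring

lemma rootPerm_swap23 : rootPerm (Equiv.swap 2 3) = permT3 := by
  refine Equiv.ext fun g => funext fun i => ?_
  fin_cases i <;>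
    simp [rootPerm_apply, rootAct, ofRootCoord, rootCoord, permT3, mapT3,
      Equiv.swap_apply_def] <;> ring

lemma rootPerm_swap03_mul_swap12 : rootPerm (Equiv.swap 0 3 * Equiv.swap 1 2) = permM := by
  refine Equiv.ext fun g => funext fun i => ?_
  fin_cases i <;>
    simp [rootPerm_apply, rootAct, ofRootCoord, rootCoord, permM, mapM,
      Equiv.swap_apply_def, Equiv.Perm.mul_def] <;> ring

lemma range_rootPerm :
    rootPerm.range =
      Subgroup.closure ({permT2, permT3, permJ} : Set (Equiv.Perm (Fin 4 → ℝ))) := by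
  rw [MonoidHom.range_eq_map,
    ← Subgroup.closure_eq_top_of_mclosure_eq_top (Equiv.Perm.mclosure_swap_castSucc_succ 3),
    MonoidHom.map_closure, ← Set.range_comp]
  congr 1
  ext σ
  simp only [Nat.reduceAdd, Set.mem_range, Function.comp_apply, Fin.exists_fin_succ,
    IsEmpty.exists_iff, or_false, Fin.isValue, Fin.castSucc_zero, Fin.succ_zero_eq_one,
    Fin.castSucc_succ, Fin.succ_one_eq_two, Fin.reduceSucc, rootPerm_swap01, rootPerm_swap12,
    rootPerm_swap23, Set.mem_insert_iff, Set.mem_singleton_iff]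
  tauto

lemma mem_PiG_iff_rootCoord (g : Fin 4 → ℝ) :
    g ∈ PiG ↔ ∀ i j, i ≠ j → -2 < 2 * (g 0 + g 1) + rootCoord g i + rootCoord g j := by
  simp only [PiG, PiR, PiSet, sg, gdual, Set.mem_ofPred_eq, Matrix.cons_val_zero,
    Matrix.cons_val_one]
  constructor
  · rintro ⟨⟨⟨h0, h1, h0', h1'⟩, hs⟩, hG⟩ i j hij
    fin_cases i <;> fin_cases j <;> simp_all [rootCoord] <;> linarith
  · intro h
    have h01 := h 0 1 (by decide)
    have h02 := h 0 2 (by decide)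
    have h03 := h 0 3 (by decide)
    have h12 := h 1 2 (by decide)
    have h13 := h 1 3 (by decide)
    have h23 := h 2 3 (by decide)
    simp only [rootCoord, Matrix.cons_val_zero, Matrix.cons_val_one, Matrix.cons_val]
      at h01 h02 h03 h12 h13 h23
    refine ⟨⟨⟨?_, ?_, ?_, ?_⟩, ?_⟩, ?_⟩ <;> linarith

lemma rootAct_mem_PiG (σ : Equiv.Perm (Fin 4)) {g : Fin 4 → ℝ} (hg : g ∈ PiG) :
    rootAct σ g ∈ PiG := by
  rw [mem_PiG_iff_rootCoord] at hg ⊢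
  intro i j hij
  rw [rootAct_add, rootCoord_rootAct]
  exact hg _ _ (σ.symm.injective.ne hij)

lemma rootPerm_image_PiG (σ : Equiv.Perm (Fin 4)) : rootPerm σ '' PiG = PiG := by
  refine (Set.image_subset_iff.2 fun g => rootAct_mem_PiG σ).antisymm fun g hg => ?_
  exact ⟨rootPerm σ⁻¹ g, rootAct_mem_PiG σ⁻¹ hg,
    by rw [map_inv, Equiv.Perm.inv_def, Equiv.apply_symm_apply]⟩

/-- Theorem 3.1: the group `G` generated by `T₂`, `T₃` and `J_N` is
isomorphic to `S₄`, contains the mirror map, and every element of `G` maps `Π_G`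
onto `Π_G`. -/
theorem statement8 :
    Nonempty (↥(Subgroup.closure ({permT2, permT3, permJ} :
        Set (Equiv.Perm (Fin 4 → ℝ)))) ≃* Equiv.Perm (Fin 4)) ∧
    permM ∈ Subgroup.closure ({permT2, permT3, permJ} : Set (Equiv.Perm (Fin 4 → ℝ))) ∧
    ∀ σ ∈ Subgroup.closure ({permT2, permT3, permJ} : Set (Equiv.Perm (Fin 4 → ℝ))),
      (⇑σ) '' PiG = PiG := by
  rw [← range_rootPerm]
  refine ⟨⟨(MonoidHom.ofInjective rootPerm_injective).symm⟩,
    ⟨_, rootPerm_swap03_mul_swap12⟩, ?_⟩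
  rintro _ ⟨τ, rfl⟩
  exact rootPerm_image_PiG τ

end Heun
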